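/- arXiv:2605.10777 — 3 statements merged into one kernel-verified Lean document; each statement's English description precedes it below -/
import Mathlib

section
/- For every real a > 0, at the scaled point (a⁻¹ W1, a W2) the gradient of ℓ with respect to the second argument equals a⁻¹ times the gradient of ℓ with respect to the second argument at (W1, W2), and the gradient with respect to the first argument equals a times the gradient with respect to the first argument at (W1, W2); i.e., the gradient of the enlarged factor a W2 scales as a⁻¹ and the gradient of the shrunken factor a⁻¹ W1 scales as a. -/
open Matrix

attribute [local instance] Matrix.frobeniusNormedAddCommGroup Matrix.frobeniusNormedSpace

/-- Frobenius inner product of two square real matrices. -/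
def finner {d : ℕ} (A B : Matrix (Fin d) (Fin d) ℝ) : ℝ :=
  ∑ i, ∑ j, A i j * B i j

/-- Squared Frobenius norm. -/
def froSq {d : ℕ} (A : Matrix (Fin d) (Fin d) ℝ) : ℝ :=
  ∑ i, ∑ j, (A i j) ^ 2

/-- The matrix-factorization loss ℓ(A, B) = ‖A B − M‖_F². -/
def loss {d : ℕ} (M A B : Matrix (Fin d) (Fin d) ℝ) : ℝ :=
  froSq (A * B - M)

/-- `G` is the gradient of ℓ with respect to its first argument at `(A, B)`:
the Fréchet derivative of `X ↦ ℓ(X, B)` at `A` acts as `E ↦ ⟨G, E⟩_F`. -/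
def IsGradFirst {d : ℕ} (M A B G : Matrix (Fin d) (Fin d) ℝ) : Prop :=
  ∃ L : Matrix (Fin d) (Fin d) ℝ →L[ℝ] ℝ,
    HasFDerivAt (fun X : Matrix (Fin d) (Fin d) ℝ => loss M X B) L A ∧
    ∀ E : Matrix (Fin d) (Fin d) ℝ, L E = finner G E

/-- `G` is the gradient of ℓ with respect to its second argument at `(A, B)`:
the Fréchet derivative of `Y ↦ ℓ(A, Y)` at `B` acts as `E ↦ ⟨G, E⟩_F`. -/
def IsGradSecond {d : ℕ} (M A B G : Matrix (Fin d) (Fin d) ℝ) : Prop :=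
  ∃ L : Matrix (Fin d) (Fin d) ℝ →L[ℝ] ℝ,
    HasFDerivAt (fun Y : Matrix (Fin d) (Fin d) ℝ => loss M A Y) L B ∧
    ∀ E : Matrix (Fin d) (Fin d) ℝ, L E = finner G E

lemma finner_std {d : ℕ} (G : Matrix (Fin d) (Fin d) ℝ) (i j : Fin d) :
    finner G (Matrix.single i j 1) = G i j := by
  simp [finner, Matrix.single, ite_and, Finset.sum_ite_eq]

lemma finner_smul_left {d : ℕ} (c : ℝ) (G E : Matrix (Fin d) (Fin d) ℝ) :
    finner (c • G) E = c * finner G E := by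
  simp [finner, Finset.mul_sum, mul_assoc]

lemma finner_ext {d : ℕ} {G H : Matrix (Fin d) (Fin d) ℝ}
    (h : ∀ E, finner G E = finner H E) : G = H := by
  ext i j
  have := h (Matrix.single i j 1)
  simpa [finner_std] using this

lemma smul_hasFDerivAt {d : ℕ} (c : ℝ) (x : Matrix (Fin d) (Fin d) ℝ) :
    HasFDerivAt (fun Y : Matrix (Fin d) (Fin d) ℝ => c • Y)
      (c • ContinuousLinearMap.id ℝ (Matrix (Fin d) (Fin d) ℝ)) x :=
  (c • ContinuousLinearMap.id ℝ (Matrix (Fin d) (Fin d) ℝ)).hasFDerivAt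

/-- At the scaled point `(a⁻¹ W1, a W2)`, the gradient in the second argument scales as
`a⁻¹` and the gradient in the first argument scales as `a`. -/
theorem grad_scaling (d : ℕ) (hd : 0 < d) (M W1 W2 : Matrix (Fin d) (Fin d) ℝ)
    (a : ℝ) (ha : 0 < a)
    (G1 G2 G1' G2' : Matrix (Fin d) (Fin d) ℝ)
    (hG1 : IsGradFirst M W1 W2 G1) (hG2 : IsGradSecond M W1 W2 G2)
    (hG1' : IsGradFirst M (a⁻¹ • W1) (a • W2) G1')
    (hG2' : IsGradSecond M (a⁻¹ • W1) (a • W2) G2') :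
    G2' = a⁻¹ • G2 ∧ G1' = a • G1 := by
  have ha0 : a ≠ 0 := ha.ne'
  obtain ⟨L2, hL2, hL2e⟩ := hG2
  obtain ⟨L2', hL2', hL2'e⟩ := hG2'
  obtain ⟨L1, hL1, hL1e⟩ := hG1
  obtain ⟨L1', hL1', hL1'e⟩ := hG1'
  constructor
  · -- second argument
    have hcomp : HasFDerivAt (fun Y => loss M (a⁻¹ • W1) (a • Y))
        (L2'.comp (a • ContinuousLinearMap.id ℝ (Matrix (Fin d) (Fin d) ℝ))) W2 :=
      hL2'.comp W2 (smul_hasFDerivAt a W2)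
    have heq : (fun Y : Matrix (Fin d) (Fin d) ℝ => loss M (a⁻¹ • W1) (a • Y))
        = fun Y => loss M W1 Y := by
      funext Y
      unfold loss
      congr 1
      rw [Matrix.smul_mul, Matrix.mul_smul, smul_smul, inv_mul_cancel₀ ha0, one_smul]
    rw [heq] at hcomp
    have huniq := hcomp.unique hL2
    apply finner_ext
    intro E
    have h1 : L2 E = a * L2' E := by
      rw [← huniq]
      simp [smul_eq_mul]
    have := hL2'e E
    rw [finner_smul_left, ← hL2e E, h1, ← mul_assoc, inv_mul_cancel₀ ha0, one_mul]
    exact this.symm ▸ rfl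
  · -- first argument
    have hcomp : HasFDerivAt (fun X => loss M (a⁻¹ • X) (a • W2))
        (L1'.comp (a⁻¹ • ContinuousLinearMap.id ℝ (Matrix (Fin d) (Fin d) ℝ))) W1 :=
      hL1'.comp W1 (smul_hasFDerivAt a⁻¹ W1)
    have heq : (fun X : Matrix (Fin d) (Fin d) ℝ => loss M (a⁻¹ • X) (a • W2))
        = fun X => loss M X W2 := by
      funext X
      unfold loss
      congr 1
      rw [Matrix.smul_mul, Matrix.mul_smul, smul_smul, inv_mul_cancel₀ ha0, one_smul]
    rw [heq] at hcomp
    have huniq := hcomp.unique hL1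
    apply finner_ext
    intro E
    have h1 : L1 E = a⁻¹ * L1' E := by
      rw [← huniq]
      simp [smul_eq_mul]
    rw [← hL1'e E, finner_smul_left, ← hL1e E, h1, ← mul_assoc,
      mul_inv_cancel₀ ha0, one_mul]
end

section
/- The trace of the Hessian of ℓ at (W1, W2), computed as the sum of the Hessian quadratic form over the orthonormal basis {(e_{ij}, 0)} ∪ {(0, e_{ij})} of ℝ^{d×d} × ℝ^{d×d} (where e_{ij} are the standard matrix units), equals 2d ‖W2‖_F² + 2d ‖W1‖_F². Consequently, for a > 0 the trace of the Hessian at the scaled point (a⁻¹ W1, a W2) equals 2 a² d ‖W2‖_F² + 2 a⁻² d ‖W1‖_F², which tends to infinity as a → ∞ whenever W2 ≠ 0, even though ℓ(a⁻¹ W1, a W2) = ℓ(W1, W2) for all a > 0. -/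
open Matrix Filter

/-- The Hessian quadratic form of ℓ at `(A, B)` in direction `(E1, E2)`:
`Q_{(A,B)}(E1, E2) = (d²/dt²)|_{t=0} ℓ(A + t E1, B + t E2)`. -/
noncomputable def hessQ {d : ℕ} (M A B E1 E2 : Matrix (Fin d) (Fin d) ℝ) : ℝ :=
  iteratedDeriv 2 (fun t : ℝ => loss M (A + t • E1) (B + t • E2)) 0

/-- The trace of the Hessian of ℓ at `(A, B)`, computed as the sum of the Hessian
quadratic form over the orthonormal basis `{(e_ij, 0)} ∪ {(0, e_ij)}` of
`ℝ^{d×d} × ℝ^{d×d}`, where `e_ij` are the standard matrix units. -/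
noncomputable def hessTrace {d : ℕ} (M A B : Matrix (Fin d) (Fin d) ℝ) : ℝ :=
  (∑ i, ∑ j, hessQ M A B (Matrix.single i j (1 : ℝ)) 0) +
  (∑ i, ∑ j, hessQ M A B 0 (Matrix.single i j (1 : ℝ)))

/-!
Moving along `(E, 0)` or `(0, E)` changes the residual `A B - M` affinely in `t`, by `t • (E B)`
or `t • (A E)`, so the loss is a quadratic in `t` with second derivative `2‖E B‖²` or `2‖A E‖²`.
For a matrix unit `E = e_kl`, `‖e_kl B‖²` is the squared norm of row `l` of `B` and `‖A e_kl‖²`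
that of column `k` of `A`; summing over `k, l` counts every entry `d` times. The rescaling
`(a⁻¹ W1, a W2)` leaves the product `W1 W2`, hence the loss, unchanged, while `‖a W2‖² = a² ‖W2‖²`.
-/

theorem iteratedDeriv_two_quadratic {𝕜 : Type*} [NontriviallyNormedField 𝕜] (a b c x : 𝕜) :
    iteratedDeriv 2 (fun t : 𝕜 => a * t ^ 2 + b * t + c) x = 2 * a := by
  have hderiv : deriv (fun t : 𝕜 => a * t ^ 2 + b * t + c) = fun t => 2 * a * t + b := by
    funext t
    exact ((((hasDerivAt_pow 2 t).const_mul a).add ((hasDerivAt_id' t).const_mul b)).add_const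
      c).deriv.trans (by ring)
  rw [iteratedDeriv_succ', iteratedDeriv_one, hderiv]
  exact (((hasDerivAt_id' x).const_mul (2 * a)).add_const b).deriv.trans (mul_one _)

section froSq

variable {d : ℕ}

theorem froSq_add_smul (X Y : Matrix (Fin d) (Fin d) ℝ) (t : ℝ) :
    froSq (X + t • Y) = froSq Y * t ^ 2 + (2 * ∑ i, ∑ j, X i j * Y i j) * t + froSq X := by
  simp only [froSq, Matrix.add_apply, Matrix.smul_apply, smul_eq_mul, Finset.mul_sum,
    Finset.sum_mul, ← Finset.sum_add_distrib]
  exact Finset.sum_congr rfl fun i _ => Finset.sum_congr rfl fun j _ => by ring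

theorem iteratedDeriv_two_froSq_add_smul (X Y : Matrix (Fin d) (Fin d) ℝ) (x : ℝ) :
    iteratedDeriv 2 (fun t : ℝ => froSq (X + t • Y)) x = 2 * froSq Y := by
  simp only [froSq_add_smul, iteratedDeriv_two_quadratic]

theorem froSq_smul (c : ℝ) (A : Matrix (Fin d) (Fin d) ℝ) : froSq (c • A) = c ^ 2 * froSq A := by
  simp only [froSq, Matrix.smul_apply, smul_eq_mul, mul_pow, Finset.mul_sum]

theorem froSq_transpose (A : Matrix (Fin d) (Fin d) ℝ) : froSq Aᵀ = froSq A :=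
  Finset.sum_comm

theorem froSq_single_mul (B : Matrix (Fin d) (Fin d) ℝ) (k l : Fin d) :
    froSq (single k l (1 : ℝ) * B) = ∑ j, B l j ^ 2 := by
  rw [froSq, Finset.sum_eq_single k (fun i _ hik => by simp [single_mul_apply_of_ne _ _ _ _ _ hik])
    (by simp)]
  simp

theorem sum_froSq_single_mul (B : Matrix (Fin d) (Fin d) ℝ) :
    ∑ k, ∑ l, froSq (single k l (1 : ℝ) * B) = d * froSq B := by
  simp only [froSq_single_mul, Finset.sum_const, Finset.card_univ, Fintype.card_fin,
    nsmul_eq_mul]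
  rfl

theorem sum_froSq_mul_single (A : Matrix (Fin d) (Fin d) ℝ) :
    ∑ k, ∑ l, froSq (A * single k l (1 : ℝ)) = d * froSq A := by
  simp only [← froSq_transpose (A * _), transpose_mul, transpose_single]
  rw [Finset.sum_comm, sum_froSq_single_mul, froSq_transpose]

theorem froSq_pos {A : Matrix (Fin d) (Fin d) ℝ} (hA : A ≠ 0) : 0 < froSq A := by
  obtain ⟨i, j, hij⟩ : ∃ i j, A i j ≠ 0 := by
    by_contra! h
    exact hA (ext h)
  refine Finset.sum_pos' (fun _ _ => Finset.sum_nonneg fun _ _ => sq_nonneg _)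
    ⟨i, Finset.mem_univ _, Finset.sum_pos' (fun _ _ => sq_nonneg _) ⟨j, Finset.mem_univ _, ?_⟩⟩
  positivity

end froSq

section hessian

variable {d : ℕ} (M A B E : Matrix (Fin d) (Fin d) ℝ)

theorem hessQ_zero_right : hessQ M A B E 0 = 2 * froSq (E * B) := by
  have hline : (fun t : ℝ => loss M (A + t • E) (B + t • 0)) =
      fun t => froSq ((A * B - M) + t • (E * B)) := by
    funext t
    simp only [loss, smul_zero, add_zero, add_mul, smul_mul_assoc]
    abel_nf
  rw [hessQ, hline, iteratedDeriv_two_froSq_add_smul]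

theorem hessQ_zero_left : hessQ M A B 0 E = 2 * froSq (A * E) := by
  have hline : (fun t : ℝ => loss M (A + t • 0) (B + t • E)) =
      fun t => froSq ((A * B - M) + t • (A * E)) := by
    funext t
    simp only [loss, smul_zero, add_zero, mul_add, mul_smul_comm]
    abel_nf
  rw [hessQ, hline, iteratedDeriv_two_froSq_add_smul]

theorem hessTrace_eq : hessTrace M A B = 2 * d * froSq B + 2 * d * froSq A := by
  simp only [hessTrace, hessQ_zero_right, hessQ_zero_left, ← Finset.mul_sum,
    sum_froSq_single_mul, sum_froSq_mul_single]
  ring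

theorem loss_inv_smul_smul {a : ℝ} (ha : a ≠ 0) : loss M (a⁻¹ • A) (a • B) = loss M A B := by
  rw [loss, smul_mul_smul_comm, inv_mul_cancel₀ ha, one_smul, loss]

end hessian

theorem hess_trace_scaling_general (d : ℕ) (M W1 W2 : Matrix (Fin d) (Fin d) ℝ) :
    hessTrace M W1 W2 = 2 * d * froSq W2 + 2 * d * froSq W1 ∧
    (∀ a : ℝ, 0 < a →
      hessTrace M (a⁻¹ • W1) (a • W2) =
        2 * a ^ 2 * d * froSq W2 + 2 * (a ^ 2)⁻¹ * d * froSq W1) ∧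
    (W2 ≠ 0 →
      Tendsto (fun a : ℝ => hessTrace M (a⁻¹ • W1) (a • W2)) atTop atTop) ∧
    (∀ a : ℝ, 0 < a → loss M (a⁻¹ • W1) (a • W2) = loss M W1 W2) := by
  have hscaled (a : ℝ) : hessTrace M (a⁻¹ • W1) (a • W2) =
      2 * d * froSq W2 * a ^ 2 + 2 * d * froSq W1 * (a ^ 2)⁻¹ := by
    rw [hessTrace_eq, froSq_smul, froSq_smul, inv_pow]
    ring
  refine ⟨hessTrace_eq M W1 W2, fun a _ => by rw [hscaled]; ring, fun hW2 => ?_,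
    fun a ha => loss_inv_smul_smul M W1 W2 ha.ne'⟩
  have hd : 0 < d := Nat.pos_of_ne_zero (by rintro rfl; exact hW2 (Subsingleton.elim _ _))
  simp only [hscaled]
  have hW2pos : 0 < 2 * d * froSq W2 := by have := froSq_pos hW2; positivity
  refine ((tendsto_pow_atTop two_ne_zero).const_mul_atTop hW2pos).atTop_add (C := 0) ?_
  simpa using (tendsto_inv_atTop_zero.comp (tendsto_pow_atTop two_ne_zero)).const_mul
    (2 * d * froSq W1)

/-- The Hessian trace of ℓ at `(W1, W2)` equals `2d‖W2‖_F² + 2d‖W1‖_F²`; hence at the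
scaled point `(a⁻¹W1, aW2)` it equals `2a²d‖W2‖_F² + 2a⁻²d‖W1‖_F²`, which tends to
infinity as `a → ∞` whenever `W2 ≠ 0`, even though the loss itself is invariant. -/
theorem hess_trace_scaling (d : ℕ) (hd : 0 < d) (M W1 W2 : Matrix (Fin d) (Fin d) ℝ) :
    hessTrace M W1 W2 = 2 * d * froSq W2 + 2 * d * froSq W1 ∧
    (∀ a : ℝ, 0 < a →
      hessTrace M (a⁻¹ • W1) (a • W2) =
        2 * a ^ 2 * d * froSq W2 + 2 * (a ^ 2)⁻¹ * d * froSq W1) ∧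
    (W2 ≠ 0 →
      Tendsto (fun a : ℝ => hessTrace M (a⁻¹ • W1) (a • W2)) atTop atTop) ∧
    (∀ a : ℝ, 0 < a → loss M (a⁻¹ • W1) (a • W2) = loss M W1 W2) :=
  hess_trace_scaling_general d M W1 W2
end

section
/- For every real a > 0, the largest Rayleigh value of the Hessian of ℓ at the scaled point (a⁻¹ W1, a W2) satisfies λ_max(a⁻¹ W1, a W2) ≥ 2 a² σ_max(W2)². -/
open Matrix

/-- Largest Rayleigh value of the Hessian of ℓ at `(A, B)`:
`λ_max(A, B) = sup { Q_{(A,B)}(E1, E2) : ‖E1‖_F² + ‖E2‖_F² = 1 }`. -/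
noncomputable def lamMax {d : ℕ} (M A B : Matrix (Fin d) (Fin d) ℝ) : ℝ :=
  sSup {q : ℝ | ∃ E1 E2 : Matrix (Fin d) (Fin d) ℝ,
    froSq E1 + froSq E2 = 1 ∧ q = hessQ M A B E1 E2}

/-- Euclidean (ℓ₂) norm of a vector in ℝ^d. -/
noncomputable def enorm' {d : ℕ} (x : Fin d → ℝ) : ℝ :=
  Real.sqrt (∑ i, (x i) ^ 2)

/-- The largest singular value of `W`: `sup_{‖x‖₂ = 1} ‖W x‖₂`. -/
noncomputable def sigmaMax {d : ℕ} (W : Matrix (Fin d) (Fin d) ℝ) : ℝ :=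
  sSup {y : ℝ | ∃ x : Fin d → ℝ, enorm' x = 1 ∧ y = enorm' (W.mulVec x)}

/-!
Perturbing only the first factor along a rank-one direction `E₁ = x vᵀ` (with `E₂ = 0`) makes the
cross term of the Hessian vanish, leaving `Q = 2‖E₁ B‖_F² = 2‖Bᵀ v‖²`. Choosing `v` along `B x` and
applying Cauchy–Schwarz gives `λ_max(A, B) ≥ 2‖B x‖²` for every unit `x`, hence
`λ_max(A, B) ≥ 2 σ_max(B)²` for all `A, B`; it remains that `σ_max` is positively homogeneous.
-/

section Frobenius

variable {d : ℕ}

def frobInner (P Q : Matrix (Fin d) (Fin d) ℝ) : ℝ :=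
  ∑ i, ∑ j, P i j * Q i j

lemma froSq_nonneg (A : Matrix (Fin d) (Fin d) ℝ) : 0 ≤ froSq A := by
  unfold froSq; positivity

@[simp]
lemma froSq_zero : froSq (0 : Matrix (Fin d) (Fin d) ℝ) = 0 := by
  simp [froSq]

@[simp]
lemma froSq_neg (A : Matrix (Fin d) (Fin d) ℝ) : froSq (-A) = froSq A := by
  simp [froSq]

lemma froSq_add_le (A B : Matrix (Fin d) (Fin d) ℝ) :
    froSq (A + B) ≤ 2 * froSq A + 2 * froSq B := by
  simp only [froSq, Matrix.add_apply, Finset.mul_sum, ← Finset.sum_add_distrib]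
  gcongr with i _ j _
  nlinarith [sq_nonneg (A i j - B i j)]

lemma froSq_mul_le (A B : Matrix (Fin d) (Fin d) ℝ) :
    froSq (A * B) ≤ froSq A * froSq B := by
  calc froSq (A * B) ≤ ∑ i, ∑ j, (∑ k, A i k ^ 2) * ∑ k, B k j ^ 2 := by
        unfold froSq
        gcongr with i _ j _
        exact Finset.sum_mul_sq_le_sq_mul_sq Finset.univ (A i) (fun k => B k j)
    _ = froSq A * froSq B := by
        rw [← Finset.sum_mul_sum, froSq, froSq, Finset.sum_comm (f := fun k j => B k j ^ 2)]

lemma frobInner_le (P Q : Matrix (Fin d) (Fin d) ℝ) :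
    frobInner P Q ≤ (froSq P + froSq Q) / 2 := by
  simp only [frobInner, froSq, ← Finset.sum_add_distrib, Finset.sum_div]
  gcongr with i _ j _
  nlinarith [sq_nonneg (P i j - Q i j)]

lemma froSq_add_smul_add_smul (P S T : Matrix (Fin d) (Fin d) ℝ) (t : ℝ) :
    froSq (P + t • S + t ^ 2 • T) = froSq P + t * (2 * frobInner P S)
      + t ^ 2 * (froSq S + 2 * frobInner P T) + t ^ 3 * (2 * frobInner S T) + t ^ 4 * froSq T := by
  simp only [froSq, frobInner, Matrix.add_apply, Matrix.smul_apply, smul_eq_mul, Finset.mul_sum,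
    ← Finset.sum_add_distrib]
  exact Finset.sum_congr rfl fun i _ => Finset.sum_congr rfl fun j _ => by ring

end Frobenius

lemma iteratedDeriv_two_quartic (c₀ c₁ c₂ c₃ c₄ : ℝ) :
    iteratedDeriv 2 (fun t : ℝ => c₀ + t * c₁ + t ^ 2 * c₂ + t ^ 3 * c₃ + t ^ 4 * c₄) 0 = 2 * c₂ := by
  have hderiv : deriv (fun t : ℝ => c₀ + t * c₁ + t ^ 2 * c₂ + t ^ 3 * c₃ + t ^ 4 * c₄)
      = fun t => c₁ + 2 * t * c₂ + 3 * t ^ 2 * c₃ + 4 * t ^ 3 * c₄ := by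
    ext t
    simp (disch := fun_prop) [deriv_fun_add]
  rw [iteratedDeriv_succ, iteratedDeriv_one, hderiv]
  simp (disch := fun_prop) [deriv_fun_add]

section Hessian

variable {d : ℕ} (M A B : Matrix (Fin d) (Fin d) ℝ)

theorem hessQ_eq (E₁ E₂ : Matrix (Fin d) (Fin d) ℝ) :
    hessQ M A B E₁ E₂ = 2 * froSq (A * E₂ + E₁ * B) + 4 * frobInner (A * B - M) (E₁ * E₂) := by
  have hexpand : ∀ t : ℝ, (A + t • E₁) * (B + t • E₂) - M
      = (A * B - M) + t • (A * E₂ + E₁ * B) + t ^ 2 • (E₁ * E₂) := by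
    intro t
    simp only [add_mul, mul_add, Matrix.smul_mul, Matrix.mul_smul, smul_add, smul_smul]
    module
  simp only [hessQ, loss, hexpand, froSq_add_smul_add_smul, iteratedDeriv_two_quartic]
  ring

lemma hessQ_add_hessQ_neg_nonneg (E₁ E₂ : Matrix (Fin d) (Fin d) ℝ) :
    0 ≤ hessQ M A B E₁ E₂ + hessQ M A B E₁ (-E₂) := by
  have hcancel : frobInner (A * B - M) (E₁ * E₂) + frobInner (A * B - M) (E₁ * -E₂) = 0 := by
    simp [frobInner]
  rw [hessQ_eq, hessQ_eq]
  nlinarith [froSq_nonneg (A * E₂ + E₁ * B), froSq_nonneg (A * -E₂ + E₁ * B)]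

lemma hessQ_le_of_froSq_le_one {E₁ E₂ : Matrix (Fin d) (Fin d) ℝ}
    (h₁ : froSq E₁ ≤ 1) (h₂ : froSq E₂ ≤ 1) :
    hessQ M A B E₁ E₂ ≤ 4 * (froSq A + froSq B) + 2 * (froSq (A * B - M) + 1) := by
  have hA := froSq_nonneg A
  have hB := froSq_nonneg B
  have hE₁ := froSq_nonneg E₁
  have hE₂ := froSq_nonneg E₂
  calc hessQ M A B E₁ E₂
      ≤ 4 * (froSq (A * E₂) + froSq (E₁ * B)) + 2 * (froSq (A * B - M) + froSq (E₁ * E₂)) := by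
        rw [hessQ_eq]
        linarith [froSq_add_le (A * E₂) (E₁ * B), frobInner_le (A * B - M) (E₁ * E₂)]
    _ ≤ 4 * (froSq A * froSq E₂ + froSq E₁ * froSq B)
          + 2 * (froSq (A * B - M) + froSq E₁ * froSq E₂) := by
        gcongr <;> apply froSq_mul_le
    _ ≤ 4 * (froSq A + froSq B) + 2 * (froSq (A * B - M) + 1) := by
        gcongr
        · exact mul_le_of_le_one_right hA h₂
        · exact mul_le_of_le_one_left hB h₁
        · exact mul_le_one₀ h₁ hE₂ h₂

lemma hessQ_le_lamMax {E₁ E₂ : Matrix (Fin d) (Fin d) ℝ} (h : froSq E₁ + froSq E₂ = 1) :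
    hessQ M A B E₁ E₂ ≤ lamMax M A B := by
  refine le_csSup ⟨4 * (froSq A + froSq B) + 2 * (froSq (A * B - M) + 1), ?_⟩ ⟨E₁, E₂, h, rfl⟩
  rintro _ ⟨F₁, F₂, hF, rfl⟩
  have := froSq_nonneg F₁
  have := froSq_nonneg F₂
  exact hessQ_le_of_froSq_le_one M A B (by linarith) (by linarith)

-- The constraint set is empty when `d = 0`, and then `lamMax` is the junk value `sSup ∅ = 0`.
lemma lamMax_nonneg : 0 ≤ lamMax M A B := by
  rcases Set.eq_empty_or_nonempty {q : ℝ | ∃ E₁ E₂ : Matrix (Fin d) (Fin d) ℝ,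
      froSq E₁ + froSq E₂ = 1 ∧ q = hessQ M A B E₁ E₂} with hempty | ⟨_, E₁, E₂, h, rfl⟩
  · rw [lamMax, hempty, Real.sSup_empty]
  · have h' : froSq E₁ + froSq (-E₂) = 1 := by rwa [froSq_neg]
    have := hessQ_add_hessQ_neg_nonneg M A B E₁ E₂
    rcases le_total 0 (hessQ M A B E₁ E₂) with hpos | hneg
    · exact hpos.trans (hessQ_le_lamMax M A B h)
    · linarith [hessQ_le_lamMax M A B h']

end Hessian

section Euclidean

variable {d : ℕ}

lemma enorm'_nonneg (x : Fin d → ℝ) : 0 ≤ enorm' x :=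
  Real.sqrt_nonneg _

lemma enorm'_sq (x : Fin d → ℝ) : enorm' x ^ 2 = x ⬝ᵥ x := by
  rw [enorm', Real.sq_sqrt (by positivity), dotProduct]
  simp only [sq]

lemma enorm'_smul (c : ℝ) (x : Fin d → ℝ) : enorm' (c • x) = |c| * enorm' x := by
  simp only [enorm', Pi.smul_apply, smul_eq_mul, mul_pow, ← Finset.mul_sum]
  rw [Real.sqrt_mul (sq_nonneg c), Real.sqrt_sq_eq_abs]

lemma dotProduct_le_enorm'_mul (x y : Fin d → ℝ) : x ⬝ᵥ y ≤ enorm' x * enorm' y :=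
  Real.sum_mul_le_sqrt_mul_sqrt _ _ _

lemma froSq_vecMulVec (u v : Fin d → ℝ) : froSq (vecMulVec u v) = enorm' u ^ 2 * enorm' v ^ 2 := by
  simp only [froSq, vecMulVec_apply, mul_pow, enorm'_sq, dotProduct, ← sq, Finset.sum_mul_sum]

lemma sigmaMax_smul {a : ℝ} (ha : 0 ≤ a) (W : Matrix (Fin d) (Fin d) ℝ) :
    sigmaMax (a • W) = a * sigmaMax W := by
  rw [sigmaMax, sigmaMax, ← smul_eq_mul, ← Real.sSup_smul_of_nonneg ha]
  congr 1
  ext y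
  simp [Set.mem_smul_set, smul_mulVec, enorm'_smul, abs_of_nonneg ha, eq_comm]

lemma exists_enorm'_eq_one_enorm'_mulVec_le (B : Matrix (Fin d) (Fin d) ℝ) {x : Fin d → ℝ}
    (hx : enorm' x = 1) : ∃ v, enorm' v = 1 ∧ enorm' (B *ᵥ x) ≤ enorm' (v ᵥ* B) := by
  set y := B *ᵥ x
  rcases (enorm'_nonneg y).eq_or_lt with hy | hy
  · exact ⟨x, hx, hy ▸ enorm'_nonneg _⟩
  have hCS : enorm' y ^ 2 ≤ enorm' (y ᵥ* B) := calc
    enorm' y ^ 2 = y ⬝ᵥ (B *ᵥ x) := enorm'_sq y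
    _ = (y ᵥ* B) ⬝ᵥ x := dotProduct_mulVec y B x
    _ ≤ enorm' (y ᵥ* B) := by simpa [hx] using dotProduct_le_enorm'_mul (y ᵥ* B) x
  refine ⟨(enorm' y)⁻¹ • y, ?_, ?_⟩
  · rw [enorm'_smul, abs_inv, abs_of_pos hy, inv_mul_cancel₀ hy.ne']
  · rw [smul_vecMul, enorm'_smul, abs_inv, abs_of_pos hy, le_inv_mul_iff₀ hy, ← sq]
    exact hCS

end Euclidean

section LowerBound

variable {d : ℕ} (M A B : Matrix (Fin d) (Fin d) ℝ)

lemma two_mul_enorm'_mulVec_sq_le_lamMax {x : Fin d → ℝ} (hx : enorm' x = 1) :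
    2 * enorm' (B *ᵥ x) ^ 2 ≤ lamMax M A B := by
  obtain ⟨v, hv, hle⟩ := exists_enorm'_eq_one_enorm'_mulVec_le B hx
  have hE : froSq (vecMulVec x v) + froSq (0 : Matrix (Fin d) (Fin d) ℝ) = 1 := by
    simp [froSq_vecMulVec, hx, hv]
  calc 2 * enorm' (B *ᵥ x) ^ 2 ≤ 2 * enorm' (v ᵥ* B) ^ 2 := by
        gcongr
        exact enorm'_nonneg _
    _ = hessQ M A B (vecMulVec x v) 0 := by
        simp [hessQ_eq, frobInner, vecMulVec_mul, froSq_vecMulVec, hx]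
    _ ≤ lamMax M A B := hessQ_le_lamMax M A B hE

theorem two_mul_sigmaMax_sq_le_lamMax : 2 * sigmaMax B ^ 2 ≤ lamMax M A B := by
  have hσ : sigmaMax B ≤ √(lamMax M A B / 2) := by
    refine Real.sSup_le ?_ (Real.sqrt_nonneg _)
    rintro _ ⟨x, hx, rfl⟩
    apply Real.le_sqrt_of_sq_le
    linarith [two_mul_enorm'_mulVec_sq_le_lamMax M A B hx]
  have hσ₀ : 0 ≤ sigmaMax B :=
    Real.sSup_nonneg (by rintro _ ⟨x, -, rfl⟩; exact enorm'_nonneg _)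
  calc 2 * sigmaMax B ^ 2 ≤ 2 * √(lamMax M A B / 2) ^ 2 := by gcongr
    _ = lamMax M A B := by
        rw [Real.sq_sqrt (by linarith [lamMax_nonneg M A B])]
        ring

end LowerBound

theorem lamMax_scaled_lower_bound_general (d : ℕ)
    (M W1 W2 : Matrix (Fin d) (Fin d) ℝ) (a : ℝ) (ha : 0 < a) :
    2 * a ^ 2 * sigmaMax W2 ^ 2 ≤ lamMax M (a⁻¹ • W1) (a • W2) := by
  calc 2 * a ^ 2 * sigmaMax W2 ^ 2 = 2 * sigmaMax (a • W2) ^ 2 := by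
        rw [sigmaMax_smul ha.le]
        ring
    _ ≤ lamMax M (a⁻¹ • W1) (a • W2) := two_mul_sigmaMax_sq_le_lamMax M _ _

/-- For every `a > 0`, `λ_max(a⁻¹ W1, a W2) ≥ 2 a² σ_max(W2)²`. -/
theorem lamMax_scaled_lower_bound (d : ℕ) (hd : 0 < d)
    (M W1 W2 : Matrix (Fin d) (Fin d) ℝ) (a : ℝ) (ha : 0 < a) :
    2 * a ^ 2 * sigmaMax W2 ^ 2 ≤ lamMax M (a⁻¹ • W1) (a • W2) :=
  lamMax_scaled_lower_bound_general d M W1 W2 a ha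
end
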